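/- Fix an integer base b ≥ 2 and positive real biases p_0, …, p_{b−1} with Σ_{i<b} p_i = 1. For an infinite base-b sequence x : ℕ → {0,…,b−1}, the following are equivalent: (1) x is biased normal with respect to p_0, …, p_{b−1}, i.e., for every k ≥ 1, every offset m ≥ 0, and every block w of length k, lim_{N→∞} (1/N)·#{ j < N : x(m + jk + i) = w(i) for all i < k } = ∏_{i<k} p_{w(i)}; (2) for every k ≥ 1 and every block w of length k, lim_{ℓ→∞} (1/ℓ)·#{ j < ℓ : x(jk + i) = w(i) for all i < k } = ∏_{i<k} p_{w(i)} (biased simple normality in base b^k for every k); (3) for every r ≥ 1 and every block v of length r, lim_{n→∞} occ(x[0:n−1], v)/n = ∏_{i<r} p_{v(i)}. -/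

import Mathlib

open Filter Finset

/-- `occ x n v` is the number of (possibly overlapping) occurrences of the block
`v : Fin r → Fin b` among the first `n` digits of the sequence `x : ℕ → Fin b`. -/
def occ {b : ℕ} (x : ℕ → Fin b) (n : ℕ) {r : ℕ} (v : Fin r → Fin b) : ℕ :=
  ((Finset.range (n + 1 - r)).filter (fun m => ∀ i : Fin r, x (m + i) = v i)).card

/-!
Write `θ w = ∏ i, p (w i)` and let `μ` be the product weight `u ↦ θ u` on words of a fixed length.

(3) ⇒ (2). Let `L = T * k`. Under `μ` the number of the `T` consecutive `k`-blocks of a word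
equal to `w` is binomial, with variance `T θ (1 - θ) ≤ T / 4`. By (3) the windows `x[a, a + L)`
are distributed like `μ`, so the empirical second moment of that count over all windows is at
most `T / 4` on average, and over the windows starting at multiples of `k` at most `k T / 4`.
The block counts of these windows add up to `T` times the aligned count of `w`, up to `T ^ 2`,
so Cauchy–Schwarz puts the aligned frequency of `w` within `√(k / T) + T / N` of `θ w`; let
`T → ∞`. Property (3) is invariant under shifts of `x`, which turns (2) into (1).

(2) ⇒ (3). Inside the aligned blocks of a length `K ≥ r`, the block `v` occurs at each offset
`t ≤ K - r` with frequency `θ v` (a marginal of `μ`), so `liminf occ / n ≥ (1 - (r - 1) / K) θ v`.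
Since the `occ x n v` over all `v` of length `r` add up to `n + 1 - r` and the `θ v` add up to
`1`, these lower bounds force convergence.
-/

open Function Topology

section Asymptotics

variable {f : ℕ → ℝ} {c : ℝ}

theorem Filter.Tendsto.div_natCast_comp {g : ℕ → ℕ} {a : ℝ}
    (hf : Tendsto (fun n => f n / n) atTop (𝓝 c)) (hg : Tendsto g atTop atTop)
    (hga : Tendsto (fun n => (g n : ℝ) / n) atTop (𝓝 a)) :
    Tendsto (fun n => f (g n) / n) atTop (𝓝 (c * a)) := by
  refine ((hf.comp hg).mul hga).congr' ?_
  filter_upwards [hg.eventually_ne_atTop 0] with n hn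
  exact div_mul_div_cancel₀ (Nat.cast_ne_zero.2 hn)

theorem Filter.Tendsto.div_natCast_add (hf : Tendsto (fun n => f n / n) atTop (𝓝 c)) (d : ℕ) :
    Tendsto (fun n => f (n + d) / n) atTop (𝓝 c) := by
  have hd : Tendsto (fun n : ℕ => ((n + d : ℕ) : ℝ) / n) atTop (𝓝 1) := by
    have := (tendsto_const_div_atTop_nhds_zero_nat (d : ℝ)).const_add 1
    rw [add_zero] at this
    refine this.congr' ?_
    filter_upwards [eventually_ne_atTop 0] with n hn
    field_simp
    push_cast
    ring
  simpa using hf.div_natCast_comp (tendsto_add_atTop_nat d) hd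

theorem Filter.Tendsto.div_natCast_natDiv (hf : Tendsto (fun n => f n / n) atTop (𝓝 c))
    {K : ℕ} (hK : 0 < K) : Tendsto (fun n => f (n / K) / n) atTop (𝓝 (c / K)) := by
  have hK' : (0 : ℝ) < K := Nat.cast_pos.2 hK
  have hfloor : Tendsto (fun n : ℕ => ((n / K : ℕ) : ℝ) / n) atTop (𝓝 (1 * (1 / K))) := by
    refine ((tendsto_nat_floor_div_atTop.comp
      (tendsto_natCast_atTop_atTop.atTop_div_const hK')).mul_const (1 / (K : ℝ))).congr' ?_
    filter_upwards [eventually_ne_atTop 0] with n hn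
    simp only [comp_apply, Nat.floor_div_eq_div]
    field_simp
  simpa [div_eq_mul_one_div c] using
    hf.div_natCast_comp (Nat.tendsto_div_const_atTop hK.ne') hfloor

theorem Filter.Tendsto.div_natCast_mul (hf : Tendsto (fun n => f n / n) atTop (𝓝 c))
    {k : ℕ} (hk : 0 < k) : Tendsto (fun N => f (N * k) / N) atTop (𝓝 (c * k)) := by
  refine hf.div_natCast_comp (tendsto_id.atTop_mul_const' hk) ?_
  refine tendsto_const_nhds.congr' ?_
  filter_upwards [eventually_ne_atTop 0] with n hn
  push_cast
  field_simp

end Asymptotics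

theorem tendsto_natCast_add_one_sub_div (r : ℕ) :
    Tendsto (fun n : ℕ => ((n + 1 - r : ℕ) : ℝ) / n) atTop (𝓝 1) := by
  have := (tendsto_const_div_atTop_nhds_zero_nat (1 - r : ℝ)).const_add 1
  rw [add_zero] at this
  refine this.congr' ?_
  filter_upwards [eventually_ge_atTop r, eventually_ne_atTop 0] with n hrn hn
  rw [Nat.cast_sub (by omega)]
  field_simp
  push_cast
  ring

theorem tendsto_of_tendsto_sum_of_eventually_ge {ι β : Type*} [Fintype ι] {l : Filter β}
    {f : ι → β → ℝ} {c : ι → ℝ} (hsum : Tendsto (fun n => ∑ i, f i n) l (𝓝 (∑ i, c i)))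
    (hge : ∀ i, ∀ ε > 0, ∀ᶠ n in l, c i - ε ≤ f i n) (i : ι) :
    Tendsto (f i) l (𝓝 (c i)) := by
  classical
  rw [Metric.tendsto_nhds]
  intro ε hε
  set δ := ε / (Fintype.card ι + 1)
  have hδ : 0 < δ := by positivity
  have hδε : δ + Fintype.card ι * δ = ε := by
    simp only [δ]
    field_simp
    ring
  have hι : (1 : ℝ) ≤ Fintype.card ι := by exact_mod_cast Fintype.card_pos_iff.2 ⟨i⟩
  have hcard : ((univ.erase i).card : ℝ) ≤ Fintype.card ι := by
    exact_mod_cast card_erase_le.trans_eq card_univ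
  filter_upwards [Metric.tendsto_nhds.1 hsum δ hδ, eventually_all.2 fun j => hge j δ hδ]
    with n hs hj
  rw [Real.dist_eq] at hs ⊢
  have hsplit : f i n - c i
      = (∑ j, f j n - ∑ j, c j) - ∑ j ∈ univ.erase i, (f j n - c j) := by
    rw [← sum_sub_distrib, ← add_sum_erase _ _ (mem_univ i)]
    ring
  have hrest : -(Fintype.card ι * δ) ≤ ∑ j ∈ univ.erase i, (f j n - c j) :=
    calc -(Fintype.card ι * δ) ≤ ∑ _j ∈ univ.erase i, -δ := by
          rw [sum_const, nsmul_eq_mul]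
          nlinarith
      _ ≤ _ := sum_le_sum fun j _ => by linarith [hj j]
  rw [abs_lt] at hs ⊢
  constructor <;> nlinarith [hj i]

theorem sum_prod_filter_comp_eq {ι κ α : Type*} [Fintype ι] [Fintype κ] [DecidableEq κ]
    [Fintype α] [DecidableEq α] {q : α → ℝ} (hq : ∑ a, q a = 1) {e : ι → κ} (he : Injective e)
    (v : ι → α) : ∑ u : κ → α with ∀ i, u (e i) = v i, ∏ j, q (u j) = ∏ i, q (v i) := by
  have hfiber : ∀ j, ∑ a, q a * ∏ i with e i = j, (if a = v i then 1 else 0)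
      = ∏ i with e i = j, q (v i) := by
    intro j
    by_cases h : ∃ i, e i = j
    · obtain ⟨i, rfl⟩ := h
      have : ({i' | e i' = e i} : Finset ι) = {i} := by ext; simp [he.eq_iff]
      simp [this]
    · have : ({i | e i = j} : Finset ι) = ∅ := by ext i; simpa using fun h' => h ⟨i, h'⟩
      simp [this, hq]
  calc ∑ u : κ → α with ∀ i, u (e i) = v i, ∏ j, q (u j)
      = ∑ u : κ → α, ∏ j, (q (u j) * ∏ i with e i = j, if u j = v i then 1 else 0) := by
        rw [sum_filter]
        refine sum_congr rfl fun u _ => ?_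
        have : ∏ j, ∏ i with e i = j, (if u j = v i then (1 : ℝ) else 0)
            = ∏ i, if u (e i) = v i then 1 else 0 := by
          rw [← prod_fiberwise univ e]
          exact prod_congr rfl fun j _ => prod_congr rfl fun i hi => by
            rw [(mem_filter.1 hi).2]
        rw [prod_mul_distrib, this, Fintype.prod_boole, mul_boole]
    _ = ∏ j, ∑ a, q a * ∏ i with e i = j, (if a = v i then 1 else 0) :=
        (Fintype.prod_sum fun j a => q a * ∏ i with e i = j, if a = v i then 1 else 0).symm
    _ = ∏ i, q (v i) := by
        rw [prod_congr rfl fun j _ => hfiber j, prod_fiberwise univ e (fun i => q (v i))]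

theorem sum_mul_sq_card_filter_sub {Ω ι : Type*} [Fintype Ω] [Fintype ι] {μ : Ω → ℝ}
    (hμ : ∑ ω, μ ω = 1) (E : ι → Ω → Prop) [∀ i, DecidablePred (E i)] {θ : ℝ}
    (h1 : ∀ i, ∑ ω with E i ω, μ ω = θ)
    (h2 : ∀ i j, i ≠ j → ∑ ω with E i ω ∧ E j ω, μ ω = θ ^ 2) :
    ∑ ω, μ ω * ((#{i | E i ω} : ℝ) - Fintype.card ι * θ) ^ 2
      = Fintype.card ι * θ * (1 - θ) := by
  classical
  set I : ι → Ω → ℝ := fun i ω => if E i ω then 1 else 0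
  have hcard : ∀ ω, (#{i | E i ω} : ℝ) = ∑ i, I i ω := by
    intro ω
    simp only [I, card_filter, Nat.cast_sum, Nat.cast_ite, Nat.cast_one, Nat.cast_zero]
  have hmean : ∀ i, ∑ ω, μ ω * I i ω = θ := by
    intro i
    simp only [I, mul_boole, ← sum_filter, h1]
  have hpair : ∀ i j, ∑ ω, μ ω * (I i ω * I j ω) = θ ^ 2 + if i = j then θ - θ ^ 2 else 0 := by
    intro i j
    have hII : ∀ ω, I i ω * I j ω = if E i ω ∧ E j ω then 1 else 0 := by
      intro ω
      simp only [I]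
      split_ifs <;> simp_all
    simp only [hII, mul_boole, ← sum_filter]
    split_ifs with hij
    · subst hij
      simp only [and_self, h1]
      ring
    · rw [h2 i j hij]
      ring
  have hfirst : ∑ ω, μ ω * ∑ i, I i ω = Fintype.card ι * θ := by
    simp_rw [mul_sum]
    rw [sum_comm]
    simp [hmean]
  have hsecond : ∑ ω, μ ω * (∑ i, I i ω) ^ 2
      = Fintype.card ι * (Fintype.card ι * θ ^ 2 + (θ - θ ^ 2)) := by
    simp_rw [sq (∑ i, I i _), sum_mul_sum, mul_sum]
    rw [sum_comm]
    simp_rw [sum_comm (s := univ (α := Ω))]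
    simp [hpair, sum_add_distrib]
    ring
  calc ∑ ω, μ ω * ((#{i | E i ω} : ℝ) - Fintype.card ι * θ) ^ 2
      = ∑ ω, (μ ω * (∑ i, I i ω) ^ 2 - 2 * Fintype.card ι * θ * (μ ω * ∑ i, I i ω)
          + (Fintype.card ι * θ) ^ 2 * μ ω) :=
        sum_congr rfl fun ω _ => by rw [hcard]; ring
    _ = Fintype.card ι * θ * (1 - θ) := by
        rw [sum_add_distrib, sum_sub_distrib, ← mul_sum, ← mul_sum, hfirst, hsecond, hμ]
        ring

theorem card_filter_univ_fin_eq_count (Q : ℕ → Prop) [DecidablePred Q] (T : ℕ) :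
    #{i : Fin T | Q i} = Nat.count Q T := by
  rw [Nat.count_eq_card_filter_range, ← Nat.Iio_eq_range, ← Fin.map_valEmbedding_univ,
    filter_map, card_map]
  rfl

theorem abs_sum_count_add_sub_le (P : ℕ → Prop) [DecidablePred P] (N T : ℕ) :
    |∑ j ∈ range N, (Nat.count (fun i => P (j + i)) T : ℝ) - T * Nat.count P N| ≤ T ^ 2 := by
  have hswap : ∑ j ∈ range N, (Nat.count (fun i => P (j + i)) T : ℝ)
      = ∑ i ∈ range T, (Nat.count (fun j => P (i + j)) N : ℝ) := by
    simp only [Nat.count_eq_card_filter_range, card_filter, Nat.cast_sum]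
    rw [sum_comm]
    simp only [add_comm]
  have hterm : ∀ i ∈ range T,
      |(Nat.count (fun j => P (i + j)) N : ℝ) - Nat.count P N| ≤ T := by
    intro i hi
    have hiT : (i : ℝ) ≤ T := by exact_mod_cast (mem_range.1 hi).le
    have key : (Nat.count P i : ℝ) + Nat.count (fun j => P (i + j)) N
        = Nat.count P N + Nat.count (fun j => P (N + j)) i := by
      exact_mod_cast (Nat.count_add P i N).symm.trans (add_comm i N ▸ Nat.count_add P N i)
    have h₁ : (Nat.count P i : ℝ) ≤ i := by exact_mod_cast Nat.count_le P
    have h₂ : (Nat.count (fun j => P (N + j)) i : ℝ) ≤ i := by exact_mod_cast Nat.count_le _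
    rw [abs_le]
    constructor <;> linarith [(Nat.count P i).cast_nonneg (α := ℝ),
      (Nat.count (fun j => P (N + j)) i).cast_nonneg (α := ℝ)]
  calc |∑ j ∈ range N, (Nat.count (fun i => P (j + i)) T : ℝ) - T * Nat.count P N|
      = |∑ i ∈ range T, ((Nat.count (fun j => P (i + j)) N : ℝ) - Nat.count P N)| := by
        rw [hswap, sum_sub_distrib, sum_const, card_range, nsmul_eq_mul]
    _ ≤ ∑ i ∈ range T, |(Nat.count (fun j => P (i + j)) N : ℝ) - Nat.count P N| :=
        abs_sum_le_sum_abs _ _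
    _ ≤ ∑ _i ∈ range T, (T : ℝ) := sum_le_sum hterm
    _ = T ^ 2 := by rw [sum_const, card_range, nsmul_eq_mul, sq]

section Windows

variable {α : Type*} {x : ℕ → α}

def window (x : ℕ → α) (L a : ℕ) : Fin L → α := fun i => x (a + i)

theorem window_eq_iff {L a : ℕ} {u : Fin L → α} :
    window x L a = u ↔ ∀ i : Fin L, x (a + i) = u i :=
  funext_iff

theorem window_shift (m L a : ℕ) : window (fun t => x (m + t)) L a = window x L (m + a) := by
  ext i
  simp only [window, add_assoc]

variable [DecidableEq α] {T k : ℕ}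

-- The `i`-th block of `u` occupies the positions `finProdFinEquiv (i, l) = l + k * i`, `l < k`.
def blockCount (w : Fin k → α) (u : Fin (T * k) → α) : ℕ :=
  #{i : Fin T | ∀ l, u (finProdFinEquiv (i, l)) = w l}

theorem blockCount_window (w : Fin k → α) (j : ℕ) :
    blockCount w (window x (T * k) (j * k))
      = Nat.count (fun i => window x k ((j + i) * k) = w) T := by
  rw [blockCount, ← card_filter_univ_fin_eq_count]
  refine congrArg card (filter_congr fun i _ => ?_)
  simp only [window_eq_iff, window, finProdFinEquiv_apply_val]
  refine forall_congr' fun l => ?_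
  rw [show j * k + (l + k * i : ℕ) = (j + i) * k + l by ring]

theorem sum_prod_mul_sq_blockCount_sub [Fintype α] {q : α → ℝ} (hq : ∑ a, q a = 1)
    (w : Fin k → α) :
    ∑ u : Fin (T * k) → α, (∏ j, q (u j)) * ((blockCount w u : ℝ) - T * ∏ l, q (w l)) ^ 2
      = T * (∏ l, q (w l)) * (1 - ∏ l, q (w l)) := by
  have hinj : ∀ i : Fin T, Injective fun l : Fin k => finProdFinEquiv (i, l) := fun i _ _ h =>
    (Prod.mk.inj (finProdFinEquiv.injective h)).2
  have hpair : ∀ i i' : Fin T, i ≠ i' →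
      ∑ u : Fin (T * k) → α with (∀ l, u (finProdFinEquiv (i, l)) = w l) ∧
        ∀ l, u (finProdFinEquiv (i', l)) = w l, ∏ j, q (u j) = (∏ l, q (w l)) ^ 2 := by
    intro i i' hii'
    have hdisj : Injective (Sum.elim (fun l : Fin k => finProdFinEquiv (i, l))
        fun l => finProdFinEquiv (i', l)) :=
      (hinj i).sumElim (hinj i') fun l l' h => hii' (Prod.mk.inj (finProdFinEquiv.injective h)).1
    have := sum_prod_filter_comp_eq hq hdisj (Sum.elim w w)
    simp only [Sum.forall, Sum.elim_inl, Sum.elim_inr, Fintype.prod_sum_type] at this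
    rw [this, sq]
  have h := sum_mul_sq_card_filter_sub (μ := fun u : Fin (T * k) → α => ∏ j, q (u j))
    (by rw [← Fintype.prod_sum fun _ a => q a]; simp [hq])
    (fun i u => ∀ l, u (finProdFinEquiv (i, l)) = w l)
    (fun i => by convert sum_prod_filter_comp_eq hq (hinj i) w) hpair
  simpa [blockCount] using h

end Windows

section Frequencies

variable {b : ℕ} {x : ℕ → Fin b} {p : Fin b → ℝ}

theorem occ_eq_card_filter_window (n : ℕ) {r : ℕ} (v : Fin r → Fin b) :
    occ x n v = #{m ∈ range (n + 1 - r) | window x r m = v} := by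
  simp only [occ, window_eq_iff]

theorem occ_eq_count (n : ℕ) {r : ℕ} (v : Fin r → Fin b) :
    occ x n v = Nat.count (fun m => ∀ i : Fin r, x (m + i) = v i) (n + 1 - r) := by
  rw [Nat.count_eq_card_filter_range]
  rfl

theorem sum_occ (n r : ℕ) : ∑ v : Fin r → Fin b, occ x n v = n + 1 - r := by
  simp_rw [occ_eq_card_filter_window]
  rw [← card_eq_sum_card_fiberwise fun _ _ => mem_univ _, card_range]

theorem tendsto_sum_window_div {L : ℕ} (hL : 1 ≤ L) {μ : (Fin L → Fin b) → ℝ}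
    (hx : ∀ u, Tendsto (fun n => (occ x n u : ℝ) / n) atTop (𝓝 (μ u)))
    (g : (Fin L → Fin b) → ℝ) :
    Tendsto (fun n => (∑ a ∈ range n, g (window x L a)) / n) atTop (𝓝 (∑ u, μ u * g u)) := by
  have hfib : ∀ n, ∑ a ∈ range n, g (window x L a)
      = ∑ u, (occ x (n + (L - 1)) u : ℝ) * g u := by
    intro n
    rw [← sum_fiberwise (range n) (window x L)]
    refine sum_congr rfl fun u _ => ?_
    rw [sum_congr rfl fun a ha => by rw [(mem_filter.1 ha).2], sum_const, nsmul_eq_mul,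
      occ_eq_card_filter_window, show n + (L - 1) + 1 - L = n by omega]
  simp_rw [hfib, sum_div]
  refine tendsto_finsetSum _ fun u _ => ?_
  simpa only [mul_div_right_comm] using ((hx u).div_natCast_add (L - 1)).mul_const (g u)

theorem tendsto_occ_shift {r : ℕ} {v : Fin r → Fin b} {c : ℝ}
    (hx : Tendsto (fun n => (occ x n v : ℝ) / n) atTop (𝓝 c)) (m : ℕ) :
    Tendsto (fun n => (occ (fun t => x (m + t)) n v : ℝ) / n) atTop (𝓝 c) := by
  set P := fun s => ∀ i : Fin r, x (s + i) = v i
  have hsplit : ∀ n, r ≤ n + 1 →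
      (occ (fun t => x (m + t)) n v : ℝ) = occ x (n + m) v - Nat.count P m := by
    intro n hn
    rw [occ_eq_count, occ_eq_count, show n + m + 1 - r = m + (n + 1 - r) by omega,
      Nat.count_add]
    simp only [P, add_assoc, Nat.cast_add, add_sub_cancel_left]
  have := (hx.div_natCast_add m).sub (tendsto_const_div_atTop_nhds_zero_nat (Nat.count P m : ℝ))
  rw [sub_zero] at this
  refine this.congr' ?_
  filter_upwards [eventually_ge_atTop r] with n hn
  rw [hsplit n (by omega), sub_div]

theorem sum_card_filter_window_le_occ {r K : ℕ} (hr : 1 ≤ r) (n : ℕ) (v : Fin r → Fin b) :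
    ∑ t ∈ range (K + 1 - r), #{j ∈ range (n / K) | window x r (j * K + t) = v}
      ≤ occ x n v := by
  rw [← card_sigma, occ_eq_card_filter_window]
  refine card_le_card_of_injOn (fun tj => tj.2 * K + tj.1) ?_ ?_
  · rintro ⟨t, j⟩ htj
    simp only [coe_sigma, Set.mem_sigma_iff, coe_range, Set.mem_Iio, mem_coe, mem_filter,
      mem_range] at htj
    obtain ⟨ht, hj, hjv⟩ := htj
    have h₁ : j * K + K ≤ n / K * K := by
      simpa [add_mul] using Nat.mul_le_mul_right K (Nat.succ_le_of_lt hj)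
    have h₂ := Nat.div_mul_le_self n K
    refine mem_filter.2 ⟨mem_range.2 ?_, hjv⟩
    dsimp only
    omega
  · rintro ⟨t, j⟩ htj ⟨t', j'⟩ htj' h
    simp only [coe_sigma, Set.mem_sigma_iff, coe_range, Set.mem_Iio, mem_coe, mem_filter,
      mem_range] at htj htj' h
    have hK : 0 < K := by omega
    have ht : t < K := by omega
    have ht' : t' < K := by omega
    have hmod := congrArg (· % K) h
    have hdiv := congrArg (· / K) h
    simp only [add_comm (_ * K), Nat.add_mul_mod_self_right, Nat.mod_eq_of_lt ht,
      Nat.mod_eq_of_lt ht'] at hmod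
    simp only [add_comm (_ * K), Nat.add_mul_div_right _ _ hK, Nat.div_eq_of_lt ht,
      Nat.div_eq_of_lt ht', zero_add] at hdiv
    subst hmod hdiv
    rfl

theorem tendsto_card_filter_window_add (hp : ∑ a, p a = 1) {K : ℕ}
    (hx : ∀ u : Fin K → Fin b,
      Tendsto (fun N => (#{j ∈ range N | window x K (j * K) = u} : ℝ) / N) atTop
        (𝓝 (∏ i, p (u i))))
    {r t : ℕ} (ht : t + r ≤ K) (v : Fin r → Fin b) :
    Tendsto (fun N => (#{j ∈ range N | window x r (j * K + t) = v} : ℝ) / N) atTop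
      (𝓝 (∏ i, p (v i))) := by
  set e : Fin r → Fin K := fun i => Fin.castLE ht (Fin.natAdd t i)
  have he : Injective e := (Fin.castLE_injective ht).comp (Fin.natAdd_injective r t)
  have hwin : ∀ a, window x r (a + t) = fun i => window x K a (e i) := fun a => by
    ext i
    simp [window, e, add_assoc]
  set C : Finset (Fin K → Fin b) := {u | ∀ i, u (e i) = v i}
  have hcard : ∀ N, #{j ∈ range N | window x r (j * K + t) = v}
      = ∑ u ∈ C, #{j ∈ range N | window x K (j * K) = u} := by
    intro N
    rw [card_eq_sum_card_fiberwise (f := fun j => window x K (j * K)) (t := C)]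
    · refine sum_congr rfl fun u hu => ?_
      rw [filter_filter]
      refine congrArg card (filter_congr fun j _ => ?_)
      rw [hwin, funext_iff]
      exact ⟨fun h => h.2, fun h => ⟨by simpa [h, C] using hu, h⟩⟩
    · intro j hj
      simpa [hwin, funext_iff, C] using (mem_filter.1 hj).2
  simp_rw [hcard, Nat.cast_sum, sum_div]
  have := tendsto_finsetSum C fun u _ => hx u
  rwa [show ∑ u ∈ C, ∏ i, p (u i) = ∏ i, p (v i) by convert sum_prod_filter_comp_eq hp he v]
    at this

end Frequencies

section Normality

variable {b : ℕ} {p : Fin b → ℝ} {x : ℕ → Fin b}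

def IsBiasedNormal (p : Fin b → ℝ) (x : ℕ → Fin b) : Prop :=
  ∀ k, 1 ≤ k → ∀ m, ∀ w : Fin k → Fin b,
    Tendsto (fun N => (#{j ∈ range N | window x k (m + j * k) = w} : ℝ) / N) atTop
      (𝓝 (∏ i, p (w i)))

def IsBiasedSimplyNormalInPowers (p : Fin b → ℝ) (x : ℕ → Fin b) : Prop :=
  ∀ k, 1 ≤ k → ∀ w : Fin k → Fin b,
    Tendsto (fun N => (#{j ∈ range N | window x k (j * k) = w} : ℝ) / N) atTop
      (𝓝 (∏ i, p (w i)))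

def HasBiasedBlockFrequencies (p : Fin b → ℝ) (x : ℕ → Fin b) : Prop :=
  ∀ r, 1 ≤ r → ∀ v : Fin r → Fin b,
    Tendsto (fun n => (occ x n v : ℝ) / n) atTop (𝓝 (∏ i, p (v i)))

theorem IsBiasedNormal.isBiasedSimplyNormalInPowers (hx : IsBiasedNormal p x) :
    IsBiasedSimplyNormalInPowers p x := fun k hk w => by
  simpa using hx k hk 0 w

theorem IsBiasedSimplyNormalInPowers.eventually_sub_le_occ_div
    (hx : IsBiasedSimplyNormalInPowers p x) (hp : ∑ a, p a = 1) {r : ℕ} (hr : 1 ≤ r)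
    (v : Fin r → Fin b) {ε : ℝ} (hε : 0 < ε) :
    ∀ᶠ n in atTop, ∏ i, p (v i) - ε ≤ (occ x n v : ℝ) / n := by
  set θ := ∏ i, p (v i)
  have hK : ∀ᶠ K : ℕ in atTop, θ - ε < ((K + 1 - r : ℕ) : ℝ) / K * θ := by
    have := (tendsto_natCast_add_one_sub_div r).mul_const θ
    rw [one_mul] at this
    exact this.eventually_const_lt (by linarith)
  obtain ⟨K, hKθ, hrK⟩ := (hK.and (eventually_ge_atTop r)).exists
  have hK₀ : 0 < K := by omega
  have hlow : Tendsto (fun n => ((∑ t ∈ range (K + 1 - r),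
      #{j ∈ range (n / K) | window x r (j * K + t) = v} : ℕ) : ℝ) / n) atTop
      (𝓝 (∑ _t ∈ range (K + 1 - r), θ / K)) := by
    push_cast
    simp_rw [sum_div]
    refine tendsto_finsetSum _ fun t ht => ?_
    have htr : t + r ≤ K := by simp only [mem_range] at ht; omega
    exact (tendsto_card_filter_window_add hp (hx K hK₀) htr v).div_natCast_natDiv hK₀
  rw [show ∑ _t ∈ range (K + 1 - r), θ / K = ((K + 1 - r : ℕ) : ℝ) / K * θ by
    rw [sum_const, card_range, nsmul_eq_mul]; ring] at hlow
  filter_upwards [hlow.eventually_const_lt hKθ] with n hn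
  exact hn.le.trans (div_le_div_of_nonneg_right
    (by exact_mod_cast sum_card_filter_window_le_occ hr n v) n.cast_nonneg)

theorem IsBiasedSimplyNormalInPowers.hasBiasedBlockFrequencies
    (hx : IsBiasedSimplyNormalInPowers p x) (hp : ∑ a, p a = 1) :
    HasBiasedBlockFrequencies p x := by
  intro r hr v
  refine tendsto_of_tendsto_sum_of_eventually_ge (f := fun v n => (occ x n v : ℝ) / n)
    ?_ (fun v _ => hx.eventually_sub_le_occ_div hp hr v) v
  have hθ : ∑ v : Fin r → Fin b, ∏ i, p (v i) = 1 := by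
    rw [← Fintype.prod_sum fun _ a => p a]
    simp [hp]
  simp_rw [hθ, ← sum_div, ← Nat.cast_sum, sum_occ]
  exact tendsto_natCast_add_one_sub_div r

theorem HasBiasedBlockFrequencies.shift (hx : HasBiasedBlockFrequencies p x) (m : ℕ) :
    HasBiasedBlockFrequencies p fun t => x (m + t) := fun r hr v =>
  tendsto_occ_shift (hx r hr v) m

theorem HasBiasedBlockFrequencies.eventually_sq_sum_count_sub_le
    (hx : HasBiasedBlockFrequencies p x) (hp : ∑ a, p a = 1) {k T : ℕ} (hk : 1 ≤ k)
    (hT : 1 ≤ T) (w : Fin k → Fin b) :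
    ∀ᶠ N in atTop, (∑ j ∈ range N, (Nat.count (fun i => window x k ((j + i) * k) = w) T : ℝ)
      - N * T * ∏ l, p (w l)) ^ 2 ≤ N ^ 2 * (k * T) := by
  set θ := ∏ l, p (w l)
  set V : (Fin (T * k) → Fin b) → ℝ := fun u => ((blockCount w u : ℝ) - T * θ) ^ 2
  have hL : 1 ≤ T * k := Nat.one_le_iff_ne_zero.2 (by positivity)
  have hlim := (tendsto_sum_window_div hL (hx _ hL) V).div_natCast_mul hk
  rw [sum_prod_mul_sq_blockCount_sub hp w] at hlim
  have hvar : T * θ * (1 - θ) * k < k * T := by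
    have : (0 : ℝ) < k * T := by positivity
    nlinarith [sq_nonneg (θ - 1 / 2)]
  filter_upwards [hlim.eventually_lt_const hvar, eventually_gt_atTop 0] with N hN hN₀
  rw [div_lt_iff₀ (by positivity)] at hN
  have hinj : Set.InjOn (· * k) (range N : Set ℕ) := fun a _ a' _ h =>
    Nat.eq_of_mul_eq_mul_right hk h
  -- Only the windows starting at multiples of `k` are kept; the others contribute `V ≥ 0`.
  have hsq : ∑ j ∈ range N, V (window x (T * k) (j * k)) ≤ N * (k * T) :=
    calc ∑ j ∈ range N, V (window x (T * k) (j * k))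
        = ∑ a ∈ (range N).image (· * k), V (window x (T * k) a) := by rw [sum_image hinj]
      _ ≤ ∑ a ∈ range (N * k), V (window x (T * k) a) := by
          refine sum_le_sum_of_subset_of_nonneg ?_ fun _ _ _ => sq_nonneg _
          intro a ha
          obtain ⟨j, hj, rfl⟩ := mem_image.1 ha
          exact mem_range.2 (Nat.mul_lt_mul_of_pos_right (mem_range.1 hj) hk)
      _ ≤ N * (k * T) := by linarith
  calc (∑ j ∈ range N, (Nat.count (fun i => window x k ((j + i) * k) = w) T : ℝ) - N * T * θ) ^ 2
      = (∑ j ∈ range N, ((Nat.count (fun i => window x k ((j + i) * k) = w) T : ℝ) - T * θ))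
          ^ 2 := by
        rw [sum_sub_distrib, sum_const, card_range, nsmul_eq_mul, mul_assoc]
    _ ≤ N * ∑ j ∈ range N, V (window x (T * k) (j * k)) := by
        simpa only [card_range, V, blockCount_window] using
          sq_sum_le_card_mul_sum_sq (s := range N)
    _ ≤ N ^ 2 * (k * T) := by nlinarith

theorem HasBiasedBlockFrequencies.isBiasedSimplyNormalInPowers
    (hx : HasBiasedBlockFrequencies p x) (hp : ∑ a, p a = 1) :
    IsBiasedSimplyNormalInPowers p x := by
  intro k hk w
  set θ := ∏ i, p (w i)
  set P : ℕ → Prop := fun j => window x k (j * k) = w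
  simp_rw [← Nat.count_eq_card_filter_range]
  rw [Metric.tendsto_atTop]
  intro ε hε
  -- `T > 4 k / ε ^ 2` makes the Cauchy–Schwarz error `√(k / T)` smaller than `ε / 2`.
  obtain ⟨T, hT⟩ := exists_nat_gt (4 * k / ε ^ 2)
  have hT₀ : (0 : ℝ) < T := (by positivity : (0 : ℝ) < 4 * k / ε ^ 2).trans hT
  have hkT : (k : ℝ) * T ≤ (T * ε / 2) ^ 2 := by
    rw [div_lt_iff₀ (by positivity)] at hT
    nlinarith
  obtain ⟨N₀, hN₀⟩ := eventually_atTop.1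
    ((hx.eventually_sq_sum_count_sub_le hp hk (Nat.cast_pos.1 hT₀) w).and
      (tendsto_natCast_atTop_atTop.eventually_gt_atTop (2 * T / ε)))
  refine ⟨N₀, fun N hN => ?_⟩
  obtain ⟨hsq, hNT⟩ := hN₀ N hN
  have hN : (0 : ℝ) < N := (by positivity : (0 : ℝ) < 2 * T / ε).trans hNT
  rw [div_lt_iff₀ hε] at hNT
  set S := ∑ j ∈ range N, (Nat.count (fun i => P (j + i)) T : ℝ)
  have hdev : |S - N * T * θ| ≤ N * T * ε / 2 := by
    refine abs_le_of_sq_le_sq (hsq.trans ?_) (by positivity)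
    nlinarith [mul_le_mul_of_nonneg_left hkT (sq_nonneg (N : ℝ))]
  have hTA : |T * Nat.count P N - N * T * θ| < N * T * ε := by
    have htri := abs_sub_le (T * Nat.count P N : ℝ) S (N * T * θ)
    rw [abs_sub_comm _ S] at htri
    have hTN : (T : ℝ) ^ 2 < N * T * ε / 2 := by nlinarith
    linarith [abs_sum_count_add_sub_le P N T]
  have hA : (Nat.count P N : ℝ) / N - θ = (T * Nat.count P N - N * T * θ) / (N * T) := by
    field_simp
  rw [Real.dist_eq, hA, abs_div, abs_of_pos (mul_pos hN hT₀), div_lt_iff₀ (mul_pos hN hT₀)]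
  linarith

theorem HasBiasedBlockFrequencies.isBiasedNormal (hx : HasBiasedBlockFrequencies p x)
    (hp : ∑ a, p a = 1) : IsBiasedNormal p x := by
  intro k hk m w
  simpa only [window_shift] using (hx.shift m).isBiasedSimplyNormalInPowers hp k hk w

end Normality

theorem biased_normal_tfae_general (b : ℕ)
    (p : Fin b → ℝ) (hsum : ∑ i, p i = 1) (x : ℕ → Fin b) :
    [(∀ k : ℕ, 1 ≤ k → ∀ m : ℕ, ∀ w : Fin k → Fin b,
        Tendsto
          (fun N : ℕ =>
            (((Finset.range N).filter
              (fun j => ∀ i : Fin k, x (m + j * k + i) = w i)).card : ℝ) / N)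
          atTop (nhds (∏ i, p (w i)))),
      (∀ k : ℕ, 1 ≤ k → ∀ w : Fin k → Fin b,
        Tendsto
          (fun ℓ : ℕ =>
            (((Finset.range ℓ).filter
              (fun j => ∀ i : Fin k, x (j * k + i) = w i)).card : ℝ) / ℓ)
          atTop (nhds (∏ i, p (w i)))),
      (∀ r : ℕ, 1 ≤ r → ∀ v : Fin r → Fin b,
        Tendsto (fun n : ℕ => (occ x n v : ℝ) / n) atTop (nhds (∏ i, p (v i))))].TFAE := by
  have key : [IsBiasedNormal p x, IsBiasedSimplyNormalInPowers p x,
      HasBiasedBlockFrequencies p x].TFAE := by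
    tfae_have 1 → 2 := IsBiasedNormal.isBiasedSimplyNormalInPowers
    tfae_have 2 → 3 := fun h => h.hasBiasedBlockFrequencies hsum
    tfae_have 3 → 1 := fun h => h.isBiasedNormal hsum
    tfae_finish
  simpa only [IsBiasedNormal, IsBiasedSimplyNormalInPowers, HasBiasedBlockFrequencies,
    window_eq_iff] using key

/-- **Equivalent characterizations of biased normality.** For a base `b ≥ 2`, positive
biases `p` summing to `1`, and `x : ℕ → Fin b`, the following are equivalent:
(1) `x` is biased normal: for every `k ≥ 1`, offset `m`, and block `w` of length `k`, the
frequency of `w` among consecutive length-`k` blocks starting at `m, m+k, m+2k, …` is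
`∏_{i<k} p_{w i}`;
(2) for every `k ≥ 1`, `x` is biased simply normal in base `b^k` with the product biases;
(3) every block `v` of length `r ≥ 1` occurs in `x` (overlapping count) with limiting
frequency `∏_{i<r} p_{v i}`. -/
theorem biased_normal_tfae (b : ℕ) (hb : 2 ≤ b)
    (p : Fin b → ℝ) (hp : ∀ i, 0 < p i) (hsum : ∑ i, p i = 1) (x : ℕ → Fin b) :
    [(∀ k : ℕ, 1 ≤ k → ∀ m : ℕ, ∀ w : Fin k → Fin b,
        Tendsto
          (fun N : ℕ =>
            (((Finset.range N).filter
              (fun j => ∀ i : Fin k, x (m + j * k + i) = w i)).card : ℝ) / N)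
          atTop (nhds (∏ i, p (w i)))),
      (∀ k : ℕ, 1 ≤ k → ∀ w : Fin k → Fin b,
        Tendsto
          (fun ℓ : ℕ =>
            (((Finset.range ℓ).filter
              (fun j => ∀ i : Fin k, x (j * k + i) = w i)).card : ℝ) / ℓ)
          atTop (nhds (∏ i, p (w i)))),
      (∀ r : ℕ, 1 ≤ r → ∀ v : Fin r → Fin b,
        Tendsto (fun n : ℕ => (occ x n v : ℝ) / n) atTop (nhds (∏ i, p (v i))))].TFAE :=
  biased_normal_tfae_general b p hsum x
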